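/- arXiv:0709.1198 — 2 statements merged into one kernel-verified Lean document; each statement's English description precedes it below -/
import Mathlib

section
/- Let η be a Hermitian positive definite quaternionic matrix and suppose the quaternionic scalar matrix i·I satisfies (η⁻¹ i η) i = h·I for some real number h. Then h = -1, i.e., η commutes with i·I, and hence η has complex entries. -/
open Quaternion Matrix

noncomputable section

/-- Embedding of a complex number into the quaternions (the span of `1` and `i`). -/
def cq (c : ℂ) : ℍ[ℝ] := ⟨c.re, c.im, 0, 0⟩

/-- The quaternion unit `i`. -/
def iq : ℍ[ℝ] := ⟨0, 1, 0, 0⟩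

/-- The quaternion unit `j`. -/
def jq : ℍ[ℝ] := ⟨0, 0, 1, 0⟩

/-- The quaternion unit `k`. -/
def kq : ℍ[ℝ] := ⟨0, 0, 0, 1⟩

/-- The quaternionic matrix `M = M_α + j M_β` built from complex matrices `M_α`, `M_β`. -/
def toQ {n : ℕ} (A B : Matrix (Fin n) (Fin n) ℂ) : Matrix (Fin n) (Fin n) ℍ[ℝ] :=
  A.map cq + Matrix.of fun a b => jq * cq (B a b)

/-- The complex projection `P[M] = (1/2)(M - i M i)`, where `i` is the scalar matrix `i·I`. -/
def P {n : ℕ} (M : Matrix (Fin n) (Fin n) ℍ[ℝ]) : Matrix (Fin n) (Fin n) ℍ[ℝ] :=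
  (2⁻¹ : ℝ) • (M - Matrix.diagonal (fun _ => iq) * M * Matrix.diagonal (fun _ => iq))

lemma iqi (q : ℍ[ℝ]) : iq * q * iq = ⟨-q.re, -q.imI, q.imJ, q.imK⟩ := by
  ext <;> simp only [Quaternion.re_mul, Quaternion.imI_mul, Quaternion.imJ_mul, Quaternion.imK_mul] <;> simp [iq]

lemma iq_comm (q : ℍ[ℝ]) (h1 : q.imJ = 0) (h2 : q.imK = 0) : q * iq = iq * q := by
  ext <;> simp only [Quaternion.re_mul, Quaternion.imI_mul, Quaternion.imJ_mul, Quaternion.imK_mul] <;> simp [iq, h1, h2]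

lemma h_eq_neg_one (q : ℍ[ℝ]) (h : ℝ) (e : iq * q * iq = h • q) (p : 0 < q.re) : h = -1 := by
  rw [iqi] at e
  have e2 := congrArg QuaternionAlgebra.re e
  simp only [Quaternion.re_smul, smul_eq_mul] at e2
  have hz : (h + 1) * q.re = 0 := by linarith
  rcases mul_eq_zero.mp hz with h0 | h0
  · linarith
  · linarith

lemma jk_zero (q : ℍ[ℝ]) (e : iq * q * iq = (-1 : ℝ) • q) : q.imJ = 0 ∧ q.imK = 0 := by
  rw [iqi] at e
  constructor
  · have := congrArg QuaternionAlgebra.imJ e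
    simp only [Quaternion.imJ_smul, smul_eq_mul] at this
    linarith
  · have := congrArg QuaternionAlgebra.imK e
    simp only [Quaternion.imK_smul, smul_eq_mul] at this
    linarith

/-- if `(η⁻¹ i η) i = h·I` for Hermitian positive definite `η`, then `h = -1`,
`η` commutes with `i·I`, and `η` has complex entries. -/
theorem eta_commutes_with_i {n : ℕ} [NeZero n] (η : Matrix (Fin n) (Fin n) ℍ[ℝ])
    [Invertible η] (hη : ηᴴ = η)
    (hpos : ∀ ψ : Fin n → ℍ[ℝ], ψ ≠ 0 → 0 < (star ψ ⬝ᵥ η.mulVec ψ).re)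
    (h : ℝ)
    (hcomm : (⅟η * Matrix.diagonal (fun _ => iq) * η) * Matrix.diagonal (fun _ => iq)
        = h • (1 : Matrix (Fin n) (Fin n) ℍ[ℝ])) :
    h = -1 ∧ η * Matrix.diagonal (fun _ => iq) = Matrix.diagonal (fun _ => iq) * η ∧
    (∀ a b, (η a b).imJ = 0 ∧ (η a b).imK = 0) := by
  have key : Matrix.diagonal (fun _ => iq) * η * Matrix.diagonal (fun _ => iq) = h • η := by
    have := congrArg (η * ·) hcomm
    simpa [Matrix.mul_smul, ← Matrix.mul_assoc, mul_invOf_self, Matrix.mul_one] using this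
  have ent : ∀ a b, iq * η a b * iq = h • η a b := by
    intro a b
    have := congrFun (congrFun key a) b
    simpa using this
  have pos : ∀ a, 0 < (η a a).re := by
    intro a
    have hne : (Pi.single a 1 : Fin n → ℍ[ℝ]) ≠ 0 := by
      intro hz
      have := congrFun hz a
      simp [Pi.single_apply] at this
    have hs : star (Pi.single a 1 : Fin n → ℍ[ℝ]) = Pi.single a 1 := by
      funext b; simp [Pi.single_apply]; split <;> simp
    have := hpos (Pi.single a 1) hne
    rw [hs, Matrix.mulVec_single, single_dotProduct] at this
    simpa using this
  have hm1 : h = -1 := h_eq_neg_one _ _ (ent 0 0) (pos 0)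
  have hJK : ∀ a b, (η a b).imJ = 0 ∧ (η a b).imK = 0 := by
    intro a b
    exact jk_zero _ (hm1 ▸ ent a b)
  refine ⟨hm1, ?_, hJK⟩
  apply Matrix.ext
  intro a b
  simp only [Matrix.mul_diagonal, Matrix.diagonal_mul]
  exact iq_comm (η a b) (hJK a b).1 (hJK a b).2
end
end

section
/- Let η be a Hermitian positive definite complex matrix, and let H = H_α + jH_β be η-quasianti-Hermitian (ηHη⁻¹ = -H†). Then H = (A_α + jA_β)η, where A_α = H_αη⁻¹ is complex anti-Hermitian (A_α† = -A_α) and A_β = H_βη⁻¹ satisfies A_βᵀ = A_β. -/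
open Quaternion Matrix ComplexOrder

noncomputable section

lemma cq_add (x y : ℂ) : cq (x + y) = cq x + cq y := by
  apply Quaternion.ext <;> simp <;> simp [cq]

lemma cq_mul (x y : ℂ) : cq (x * y) = cq x * cq y := by
  apply Quaternion.ext <;>
    simp [Quaternion.re_mul, Quaternion.imI_mul, Quaternion.imJ_mul, Quaternion.imK_mul] <;> simp [cq,
      Complex.mul_re, Complex.mul_im]

lemma cq_one : cq 1 = 1 := by apply Quaternion.ext <;> simp [cq]

lemma cq_zero : cq 0 = 0 := by apply Quaternion.ext <;> simp [cq]

lemma cq_neg (x : ℂ) : cq (-x) = -cq x := by apply Quaternion.ext <;> simp <;> simp [cq]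

/-- `cq` as a ring homomorphism. -/
def cqHom : ℂ →+* ℍ[ℝ] where
  toFun := cq
  map_one' := cq_one
  map_mul' := cq_mul
  map_zero' := cq_zero
  map_add' := cq_add

@[simp] lemma cqHom_apply (x : ℂ) : cqHom x = cq x := rfl

lemma star_cq (x : ℂ) : star (cq x) = cq (star x) := by
  apply Quaternion.ext <;> simp <;> simp [cq]

lemma star_jq : star jq = -jq := by apply Quaternion.ext <;> simp <;> simp [jq]

lemma cq_mul_jq (x : ℂ) : cq x * jq = jq * cq (star x) := by
  apply Quaternion.ext <;>
    simp [Quaternion.re_mul, Quaternion.imI_mul, Quaternion.imJ_mul, Quaternion.imK_mul] <;> simp [cq, jq]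

lemma jq_mul_cq (x : ℂ) : jq * cq x = ⟨0, 0, x.re, -x.im⟩ := by
  apply Quaternion.ext <;>
    simp [Quaternion.re_mul, Quaternion.imI_mul, Quaternion.imJ_mul, Quaternion.imK_mul] <;> simp [cq, jq]

/-- The scalar matrix `j·I`. -/
def Jm {n : ℕ} : Matrix (Fin n) (Fin n) ℍ[ℝ] := Matrix.diagonal fun _ => jq

lemma toQ_eq {n : ℕ} (A B : Matrix (Fin n) (Fin n) ℂ) :
    toQ A B = A.map cqHom + Jm * B.map cqHom := by
  refine Matrix.ext fun a b => ?_
  simp [toQ, Jm, Matrix.diagonal_mul, Matrix.map_apply]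

lemma toQ_inj {n : ℕ} {A B C D : Matrix (Fin n) (Fin n) ℂ}
    (h : toQ A B = toQ C D) : A = C ∧ B = D := by
  have h' : ∀ a b, cq (A a b) + jq * cq (B a b) = cq (C a b) + jq * cq (D a b) := by
    intro a b
    have := congrFun (congrFun h a) b
    simpa [toQ, Matrix.add_apply, Matrix.map_apply] using this
  constructor <;> refine Matrix.ext fun a b => ?_
  · have := h' a b
    rw [jq_mul_cq, jq_mul_cq] at this
    have h3 := Quaternion.ext_iff.mp this
    apply Complex.ext
    · have e := h3.1
      change (A a b).re + 0 = (C a b).re + 0 at e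
      simpa [cq] using e
    · have e := h3.2.1
      change (A a b).im + 0 = (C a b).im + 0 at e
      simpa [cq] using e
  · have := h' a b
    rw [jq_mul_cq, jq_mul_cq] at this
    have h3 := Quaternion.ext_iff.mp this
    apply Complex.ext
    · have e := h3.2.2.1
      change 0 + (B a b).re = 0 + (D a b).re at e
      simpa [cq] using e
    · have := h3.2.2.2
      change 0 + -(B a b).im = 0 + -(D a b).im at this
      simpa [cq] using this

lemma map_cq_mul_Jm {n : ℕ} (C : Matrix (Fin n) (Fin n) ℂ) :
    C.map cqHom * Jm = Jm * (C.map star).map cqHom := by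
  refine Matrix.ext fun a b => ?_
  simp [Jm, Matrix.mul_diagonal, Matrix.diagonal_mul, Matrix.map_apply, cq_mul_jq]

lemma map_cq_neg {n : ℕ} (M : Matrix (Fin n) (Fin n) ℂ) :
    (-M).map cqHom = -(M.map cqHom) := by
  refine Matrix.ext fun a b => ?_
  simp [Matrix.map_apply, cq_neg]

lemma toQ_mul_map {n : ℕ} (A B C : Matrix (Fin n) (Fin n) ℂ) :
    toQ A B * C.map cqHom = toQ (A * C) (B * C) := by
  rw [toQ_eq, toQ_eq, add_mul, Matrix.map_mul, Matrix.map_mul, mul_assoc]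

lemma map_mul_toQ {n : ℕ} (A B C : Matrix (Fin n) (Fin n) ℂ) :
    C.map cqHom * toQ A B = toQ (C * A) (C.map star * B) := by
  rw [toQ_eq, toQ_eq, mul_add, Matrix.map_mul, Matrix.map_mul, ← mul_assoc, map_cq_mul_Jm,
    mul_assoc]

lemma toQ_conjTranspose {n : ℕ} (A B : Matrix (Fin n) (Fin n) ℂ) :
    (toQ A B)ᴴ = toQ Aᴴ (-Bᵀ) := by
  rw [toQ_eq, toQ_eq]
  have hmapstar : ∀ M : Matrix (Fin n) (Fin n) ℂ, Mᴴ.map cqHom = (M.map cqHom)ᴴ :=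
    fun M => Matrix.conjTranspose_map cqHom (fun x => (star_cq x).symm)
  have hJm : (Jm : Matrix (Fin n) (Fin n) ℍ[ℝ])ᴴ = -Jm := by
    rw [Jm, Matrix.diagonal_conjTranspose]
    refine Matrix.ext fun a b => ?_
    simp [Matrix.diagonal_apply, star_jq, Pi.star_def]
    split <;> simp
  rw [Matrix.conjTranspose_add, Matrix.conjTranspose_mul, hJm]
  rw [← hmapstar B, hmapstar A]
  have key : Bᴴ.map cqHom * -Jm = Jm * (-Bᵀ).map cqHom := by
    rw [Matrix.mul_neg, map_cq_mul_Jm]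
    have h1 : (Bᴴ.map star : Matrix (Fin n) (Fin n) ℂ) = Bᵀ := by
      refine Matrix.ext fun a b => ?_
      simp [Matrix.conjTranspose_apply, Matrix.map_apply]
    rw [h1, map_cq_neg, Matrix.mul_neg]
  rw [key]

lemma toQ_neg {n : ℕ} (A B : Matrix (Fin n) (Fin n) ℂ) : -toQ A B = toQ (-A) (-B) := by
  rw [toQ_eq, toQ_eq, map_cq_neg, map_cq_neg, Matrix.mul_neg, neg_add]

/-- an η-quasianti-Hermitian quaternionic `H = H_α + j H_β` (with complex
Hermitian positive definite `η`) factorizes as `H = (A_α + j A_β) η` with `A_α = H_α η⁻¹`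
anti-Hermitian and `A_β = H_β η⁻¹` symmetric. -/
theorem quasiantiHermitian_factorization {n : ℕ} (ηc : Matrix (Fin n) (Fin n) ℂ)
    (hη : ηcᴴ = ηc) (hpos : ηc.PosDef) [Invertible ηc] [Invertible (ηc.map cq)]
    (Ha Hb : Matrix (Fin n) (Fin n) ℂ)
    (hqah : ηc.map cq * toQ Ha Hb * ⅟(ηc.map cq) = -(toQ Ha Hb)ᴴ) :
    (Ha * ⅟ηc)ᴴ = -(Ha * ⅟ηc) ∧ (Hb * ⅟ηc)ᵀ = Hb * ⅟ηc ∧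
    toQ Ha Hb = toQ (Ha * ⅟ηc) (Hb * ⅟ηc) * ηc.map cq := by
  have hmap : ηc.map cq = ηc.map cqHom := rfl
  have h1 : ηc.map cq * toQ Ha Hb = -(toQ Ha Hb)ᴴ * ηc.map cq := by
    calc ηc.map cq * toQ Ha Hb
        = ηc.map cq * toQ Ha Hb * ⅟(ηc.map cq) * ηc.map cq := by
          rw [mul_assoc, invOf_mul_self, mul_one]
      _ = -(toQ Ha Hb)ᴴ * ηc.map cq := by rw [hqah]
  have hstar : ηc.map star = ηcᵀ := by
    refine Matrix.ext fun a b => ?_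
    have := congrFun (congrFun hη b) a
    simpa [Matrix.conjTranspose_apply, Matrix.map_apply, Matrix.transpose_apply] using this
  have hL : ηc.map cq * toQ Ha Hb = toQ (ηc * Ha) (ηcᵀ * Hb) := by
    rw [hmap, map_mul_toQ, hstar]
  have hR : -(toQ Ha Hb)ᴴ * ηc.map cq = toQ (-Haᴴ * ηc) (Hbᵀ * ηc) := by
    rw [toQ_conjTranspose, toQ_neg, neg_neg, hmap, toQ_mul_map]
  rw [hL, hR] at h1
  obtain ⟨ha, hb⟩ := toQ_inj h1
  have hinvη : (⅟ηc)ᴴ = ⅟ηc := by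
    have h2 : ηcᴴ * (⅟ηc)ᴴ = 1 := by
      rw [← Matrix.conjTranspose_mul, invOf_mul_self, Matrix.conjTranspose_one]
    rw [hη] at h2
    exact (invOf_eq_right_inv h2).symm
  refine ⟨?_, ?_, ?_⟩
  · rw [Matrix.conjTranspose_mul, hinvη]
    have h2 : ηc * Ha * ⅟ηc = -Haᴴ := by rw [ha, mul_assoc, mul_invOf_self, mul_one]
    have hHa : Haᴴ = -(ηc * Ha * ⅟ηc) := by rw [h2, neg_neg]
    rw [hHa, Matrix.mul_neg, ← mul_assoc, ← mul_assoc, invOf_mul_self, one_mul]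
  · rw [Matrix.transpose_mul]
    have hHb : Hbᵀ = ηcᵀ * Hb * ⅟ηc := by rw [hb, mul_assoc, mul_invOf_self, mul_one]
    have hinvT : (⅟ηc)ᵀ * ηcᵀ = 1 := by
      rw [← Matrix.transpose_mul, mul_invOf_self, Matrix.transpose_one]
    rw [hHb, ← mul_assoc, ← mul_assoc, hinvT, one_mul]
  · rw [hmap, toQ_mul_map, mul_assoc, mul_assoc, invOf_mul_self, mul_one, mul_one]
end
end
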